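/- arXiv:2508.21383 — 2 statements merged into one kernel-verified Lean document; each statement's English description precedes it below -/
import Mathlib

section
/- Let G be a finite abelian group. The set B_ρ(G), consisting of the identity together with all zero-sum sequences A over G with ρ(L(A)) = D(G)/2, is a submonoid of B(G) and is finitely generated. -/
def IsMinZS {G : Type*} [AddCommGroup G] (U : Multiset G) : Prop :=
  U ≠ 0 ∧ U.sum = 0 ∧ ∀ V ≤ U, V ≠ 0 → V.sum = 0 → V = U

noncomputable def DavC (G : Type*) [AddCommGroup G] : ℕ :=
  sSup {n | ∃ U : Multiset G, IsMinZS U ∧ U.card = n}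

def LSet {G : Type*} [AddCommGroup G] (A : Multiset G) : Set ℕ :=
  {k | ∃ l : Multiset (Multiset G), l.card = k ∧ (∀ U ∈ l, IsMinZS U) ∧ l.sum = A}

noncomputable def rhoSet (L : Set ℕ) : ℚ := ((sSup L : ℕ) : ℚ) / ((sInf L : ℕ) : ℚ)

def IsIntervalSet (L : Set ℕ) : Prop := L.Nonempty ∧ L = Set.Icc (sInf L) (sSup L)

def Brho (G : Type*) [AddCommGroup G] : Set (Multiset G) :=
  {A | A.sum = 0 ∧ (A = 0 ∨ rhoSet (LSet A) = (DavC G : ℚ) / 2)}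

/-!
Apart from `{0}`, every minimal zero-sum sequence has length between `2` and `D = D(G)`. So if
`A` has `z` zeros, a factorization of `A` of length `k` satisfies `2k ≤ |A| + z` and
`|A| - z ≤ D (k - z)`. For `D ≠ 2`, `max L(A) = (D/2) min L(A)` then forces `z = 0` and equality in
both bounds: `A` factors into atoms of length `2` and also into atoms of length `D`, and conversely
every such `A` has elasticity `D/2`. Hence `B_ρ(G)` is the intersection of the submonoids generated
by the atoms of length `2` and of length `D`. There are finitely many atoms, as they form an
antichain in the well-quasi-ordered monoid of sequences, and the intersection of two finitely
generated submonoids of a cancellative monoid is finitely generated by Gordan's lemma. For `D = 2`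
all factorizations of `A` have the same length, so `B_ρ(G) = B(G)`.
-/

namespace AddSubmonoid

variable {N : Type*} [AddCommMonoid N] [IsCancelAdd N]

theorem FG.inf {P Q : AddSubmonoid N} (hP : P.FG) (hQ : Q.FG) : (P ⊓ Q).FG := by
  obtain ⟨S, rfl⟩ := hP
  obtain ⟨T, rfl⟩ := hQ
  let f : ((S → ℕ) × (T → ℕ)) →+ N :=
    (Fintype.linearCombination ℕ ((↑) : S → N)).toAddMonoidHom.comp (AddMonoidHom.fst _ _)
  let g : ((S → ℕ) × (T → ℕ)) →+ N :=
    (Fintype.linearCombination ℕ ((↑) : T → N)).toAddMonoidHom.comp (AddMonoidHom.snd _ _)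
  convert (fg_eqLocusM f g).map f
  ext a
  simp only [mem_inf, mem_closure_finset', mem_map, AddMonoidHom.mem_eqLocusM, Prod.exists]
  constructor
  · rintro ⟨⟨x, rfl⟩, y, hy⟩
    exact ⟨x, y, by simpa [f, g, Fintype.linearCombination_apply] using hy, rfl⟩
  · rintro ⟨x, y, hxy, rfl⟩
    refine ⟨⟨x, by simp [f, Fintype.linearCombination_apply]⟩, y, ?_⟩
    simpa [f, g, Fintype.linearCombination_apply] using hxy

end AddSubmonoid

instance Multiset.instWellQuasiOrderedLE {α : Type*} [Finite α] :
    WellQuasiOrderedLE (Multiset α) := by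
  classical
  exact (Finsupp.orderIsoMultiset (ι := α)).wellQuasiOrderedLE_iff.1 inferInstance

theorem Multiset.forall_eq_of_sum_map_le_sum_map {ι α : Type*} [AddCommMonoid α] [PartialOrder α]
    [IsOrderedCancelAddMonoid α] {s : Multiset ι} {f g : ι → α} (hle : ∀ i ∈ s, f i ≤ g i)
    (hsum : (s.map g).sum ≤ (s.map f).sum) : ∀ i ∈ s, f i = g i := by
  by_contra! h
  obtain ⟨i, hi, hne⟩ := h
  exact (Multiset.sum_lt_sum hle ⟨i, hi, (hle i hi).lt_of_ne hne⟩).not_ge hsum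

theorem Multiset.card_sum_of_forall_card_eq {α : Type*} {l : Multiset (Multiset α)} {n : ℕ}
    (h : ∀ U ∈ l, U.card = n) : l.sum.card = n * l.card := by
  rw [show l.sum.card = (l.map Multiset.card).sum from Multiset.card_join l,
    Multiset.map_congr rfl h, Multiset.map_const', Multiset.sum_replicate, smul_eq_mul, mul_comm]

section Atoms

variable {G : Type*} [AddCommGroup G]

theorem isMinZS_iff_minimal {U : Multiset G} :
    IsMinZS U ↔ Minimal (fun V : Multiset G => V ≠ 0 ∧ V.sum = 0) U := by
  refine ⟨fun ⟨hU, hs, hmin⟩ => ⟨⟨hU, hs⟩, fun V ⟨hV, hVs⟩ hle => (hmin V hle hV hVs).ge⟩,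
    fun ⟨⟨hU, hs⟩, hmin⟩ => ⟨hU, hs, fun V hle hV hVs => le_antisymm hle (hmin ⟨hV, hVs⟩ hle)⟩⟩

theorem isMinZS_zero : IsMinZS ({0} : Multiset G) :=
  ⟨Multiset.singleton_ne_zero 0, Multiset.sum_singleton 0, fun _ hV hV0 _ =>
    (Multiset.le_singleton.1 hV).resolve_left hV0⟩

theorem IsMinZS.eq_zero_of_zero_mem {U : Multiset G} (hU : IsMinZS U) (h0 : (0 : G) ∈ U) :
    U = {0} :=
  (hU.2.2 {0} (Multiset.singleton_le.2 h0) (Multiset.singleton_ne_zero 0)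
    (Multiset.sum_singleton 0)).symm

theorem IsMinZS.two_le_card {U : Multiset G} (hU : IsMinZS U) (h0 : (0 : G) ∉ U) :
    2 ≤ U.card := by
  by_contra! h
  obtain ⟨a, rfl⟩ : ∃ a, U = {a} :=
    Multiset.card_eq_one.1 (le_antisymm (by omega) (Multiset.card_pos.2 hU.1))
  exact h0 (by simpa using hU.2.1.symm)

theorem finite_setOf_isMinZS [Finite G] : {U : Multiset G | IsMinZS U}.Finite := by
  simp_rw [isMinZS_iff_minimal]
  exact (setOfPred_minimal_antichain _).finite_of_partiallyWellOrderedOn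
    (Set.isPWO_of_wellQuasiOrderedLE _)

theorem closure_setOf_isMinZS :
    (AddSubmonoid.closure {U : Multiset G | IsMinZS U} : Set (Multiset G)) =
      {A | A.sum = 0} := by
  classical
  have hle : AddSubmonoid.closure {U : Multiset G | IsMinZS U} ≤
      AddMonoidHom.mker Multiset.sumAddMonoidHom :=
    AddSubmonoid.closure_le.2 fun U hU => hU.2.1
  refine subset_antisymm hle fun A hA => ?_
  induction A using WellFoundedLT.induction with
  | ind A ih =>
    rcases eq_or_ne A 0 with rfl | hA0
    · exact zero_mem _
    obtain ⟨V, hVA, hV⟩ :=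
      exists_minimal_le_of_wellFoundedLT (fun V : Multiset G => V ≠ 0 ∧ V.sum = 0) A ⟨hA0, hA⟩
    have hsplit : V + (A - V) = A := add_tsub_cancel_of_le hVA
    have hlt : A - V < A := (lt_add_of_pos_left _ (pos_iff_ne_zero.2 hV.1.1)).trans_eq hsplit
    rw [← hsplit]
    refine add_mem (AddSubmonoid.subset_closure (isMinZS_iff_minimal.2 hV)) (ih _ hlt ?_)
    have hsum := congrArg Multiset.sum hsplit
    rw [Multiset.sum_add, hV.1.2, zero_add] at hsum
    exact hsum.trans hA

theorem IsMinZS.card_le_davC [Finite G] {U : Multiset G} (hU : IsMinZS U) : U.card ≤ DavC G :=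
  le_csSup (finite_setOf_isMinZS.image Multiset.card).bddAbove ⟨U, hU, rfl⟩

theorem one_le_davC [Finite G] : 1 ≤ DavC G :=
  isMinZS_zero.card_le_davC

theorem IsMinZS.two_le_card_add_count [DecidableEq G] {U : Multiset G} (hU : IsMinZS U) :
    2 ≤ U.card + U.count 0 := by
  by_cases h0 : (0 : G) ∈ U
  · simp [hU.eq_zero_of_zero_mem h0]
  · simpa [Multiset.count_eq_zero_of_notMem h0] using hU.two_le_card h0

theorem IsMinZS.card_add_mul_count_le [Finite G] [DecidableEq G] {U : Multiset G}
    (hU : IsMinZS U) :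
    U.card + DavC G * U.count 0 ≤ DavC G + U.count 0 := by
  by_cases h0 : (0 : G) ∈ U
  · simp [hU.eq_zero_of_zero_mem h0, add_comm]
  · simpa [Multiset.count_eq_zero_of_notMem h0] using hU.card_le_davC

theorem two_mul_card_le_card_sum_add_count [DecidableEq G] {l : Multiset (Multiset G)}
    (hl : ∀ U ∈ l, IsMinZS U) : 2 * l.card ≤ l.sum.card + l.sum.count 0 := by
  induction l using Multiset.induction_on with
  | empty => simp
  | cons U l ih =>
    have hU := (hl U (Multiset.mem_cons_self U l)).two_le_card_add_count
    have := ih fun V hV => hl V (Multiset.mem_cons_of_mem hV)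
    simp only [Multiset.card_cons, Multiset.sum_cons, Multiset.card_add, Multiset.count_add]
    omega

theorem card_sum_add_mul_count_le [Finite G] [DecidableEq G] {l : Multiset (Multiset G)}
    (hl : ∀ U ∈ l, IsMinZS U) :
    l.sum.card + DavC G * l.sum.count 0 ≤ DavC G * l.card + l.sum.count 0 := by
  induction l using Multiset.induction_on with
  | empty => simp
  | cons U l ih =>
    have hU := (hl U (Multiset.mem_cons_self U l)).card_add_mul_count_le
    have := ih fun V hV => hl V (Multiset.mem_cons_of_mem hV)
    simp only [Multiset.card_cons, Multiset.sum_cons, Multiset.card_add, Multiset.count_add,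
      mul_add, mul_one]
    omega

theorem LSet_nonempty {A : Multiset G} (hA : A.sum = 0) : (LSet A).Nonempty := by
  have hA' : A ∈ AddSubmonoid.closure {U : Multiset G | IsMinZS U} := by
    rw [← SetLike.mem_coe, closure_setOf_isMinZS]
    exact hA
  obtain ⟨l, hl, rfl⟩ := AddSubmonoid.exists_multiset_of_mem_closure hA'
  exact ⟨l.card, l, rfl, hl, rfl⟩

theorem LSet_bddAbove (A : Multiset G) : BddAbove (LSet A) := by
  classical
  refine ⟨A.card, ?_⟩
  rintro _ ⟨l, rfl, hl, rfl⟩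
  have := two_mul_card_le_card_sum_add_count hl
  have := Multiset.count_le_card 0 l.sum
  omega

theorem zero_notMem_LSet {A : Multiset G} (hA : A ≠ 0) : 0 ∉ LSet A := by
  rintro ⟨l, hl0, -, rfl⟩
  exact hA (by rw [Multiset.card_eq_zero.1 hl0, Multiset.sum_zero])

theorem rhoSet_eq_div_two_iff {L : Set ℕ} (hL : sInf L ≠ 0) (d : ℕ) :
    rhoSet L = (d : ℚ) / 2 ↔ 2 * sSup L = d * sInf L := by
  rw [rhoSet, div_eq_div_iff (by exact_mod_cast hL) two_ne_zero, mul_comm _ (2 : ℚ)]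
  norm_cast

theorem mem_brho_iff {A : Multiset G} (hA : A ≠ 0) (hs : A.sum = 0) :
    A ∈ Brho G ↔ 2 * sSup (LSet A) = DavC G * sInf (LSet A) := by
  have hm : sInf (LSet A) ≠ 0 := fun h =>
    zero_notMem_LSet hA (h ▸ Nat.sInf_mem (LSet_nonempty hs))
  simp [Brho, hs, hA, rhoSet_eq_div_two_iff hm]

theorem card_eq_two_of_card_sum_le {l : Multiset (Multiset G)} (hl : ∀ U ∈ l, IsMinZS U)
    (h0 : (0 : G) ∉ l.sum) (h : l.sum.card ≤ 2 * l.card) : ∀ U ∈ l, U.card = 2 := by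
  have hle : ∀ U ∈ l, 2 ≤ U.card := fun U hU =>
    (hl U hU).two_le_card fun h0U => h0 (Multiset.mem_join.2 ⟨U, hU, h0U⟩)
  refine fun U hU => (Multiset.forall_eq_of_sum_map_le_sum_map hle ?_ U hU).symm
  simpa [mul_comm] using (Multiset.card_join l).symm.trans_le h

theorem card_eq_davC_of_le_card_sum [Finite G] {l : Multiset (Multiset G)}
    (hl : ∀ U ∈ l, IsMinZS U) (h : DavC G * l.card ≤ l.sum.card) :
    ∀ U ∈ l, U.card = DavC G := by
  refine Multiset.forall_eq_of_sum_map_le_sum_map (fun U hU => (hl U hU).card_le_davC) ?_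
  simpa [mul_comm] using h.trans_eq (Multiset.card_join l)

def minZSOfCard (G : Type*) [AddCommGroup G] (n : ℕ) : Set (Multiset G) :=
  {U | IsMinZS U ∧ U.card = n}

theorem sum_mem_closure_minZSOfCard {l : Multiset (Multiset G)} {n : ℕ}
    (hl : ∀ U ∈ l, IsMinZS U) (hn : ∀ U ∈ l, U.card = n) :
    l.sum ∈ AddSubmonoid.closure (minZSOfCard G n) :=
  multiset_sum_mem _ fun U hU => AddSubmonoid.subset_closure ⟨hl U hU, hn U hU⟩

theorem mem_closure_inf_of_two_mul_sSup_eq [Finite G] (hD : DavC G ≠ 2) {A : Multiset G}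
    (hA : A ≠ 0) (hs : A.sum = 0) (h : 2 * sSup (LSet A) = DavC G * sInf (LSet A)) :
    A ∈ AddSubmonoid.closure (minZSOfCard G 2) ⊓
      AddSubmonoid.closure (minZSOfCard G (DavC G)) := by
  classical
  have hmM : sInf (LSet A) ≤ sSup (LSet A) :=
    Nat.sInf_le (Nat.sSup_mem (LSet_nonempty hs) (LSet_bddAbove A))
  have hm : sInf (LSet A) ≠ 0 := fun h0 =>
    zero_notMem_LSet hA (h0 ▸ Nat.sInf_mem (LSet_nonempty hs))
  obtain ⟨lM, hlMc, hlM, hlMs⟩ := Nat.sSup_mem (LSet_nonempty hs) (LSet_bddAbove A)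
  obtain ⟨lm, hlmc, hlm, hlms⟩ := Nat.sInf_mem (LSet_nonempty hs)
  have hM := two_mul_card_le_card_sum_add_count hlM
  have hm' := card_sum_add_mul_count_le hlm
  rw [hlMc, hlMs] at hM
  rw [hlmc, hlms] at hm'
  -- `2M ≤ |A| + z` and `|A| + Dz ≤ Dm + z` with `2M = Dm` give `(D - 2) z ≤ 0`;
  -- for `D < 2`, `2M = Dm` contradicts `1 ≤ m ≤ M`.
  have hz : A.count 0 = 0 := by
    rcases Nat.lt_or_gt_of_ne hD with hD | hD
    · have := Nat.mul_le_mul_right (sInf (LSet A)) (show DavC G ≤ 1 by omega)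
      omega
    · nlinarith
  have h0 : (0 : G) ∉ A := Multiset.count_eq_zero.1 hz
  refine ⟨hlMs ▸ sum_mem_closure_minZSOfCard hlM ?_, hlms ▸ sum_mem_closure_minZSOfCard hlm ?_⟩
  · exact card_eq_two_of_card_sum_le hlM (hlMs ▸ h0) (by rw [hlMs, hlMc]; omega)
  · exact card_eq_davC_of_le_card_sum hlm (by rw [hlms, hlmc]; omega)

theorem two_mul_sSup_eq_of_mem_closure_inf [Finite G] {A : Multiset G}
    (hA : A ∈ AddSubmonoid.closure (minZSOfCard G 2) ⊓
      AddSubmonoid.closure (minZSOfCard G (DavC G))) :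
    2 * sSup (LSet A) = DavC G * sInf (LSet A) := by
  classical
  obtain ⟨l₂, hl₂, rfl⟩ := AddSubmonoid.exists_multiset_of_mem_closure hA.1
  obtain ⟨lD, hlD, hlDs⟩ := AddSubmonoid.exists_multiset_of_mem_closure hA.2
  have hc₂ := Multiset.card_sum_of_forall_card_eq fun U hU => (hl₂ U hU).2
  have hcD := Multiset.card_sum_of_forall_card_eq fun U hU => (hlD U hU).2
  rw [hlDs] at hcD
  have hz : l₂.sum.count 0 = 0 := Multiset.count_eq_zero.2 fun h0 => by
    obtain ⟨U, hU, h0U⟩ := Multiset.mem_join.1 h0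
    have := (hl₂ U hU).2
    simp [(hl₂ U hU).1.eq_zero_of_zero_mem h0U] at this
  have hsup : sSup (LSet l₂.sum) = l₂.card := by
    refine IsGreatest.csSup_eq ⟨⟨l₂, rfl, fun U hU => (hl₂ U hU).1, rfl⟩, ?_⟩
    rintro _ ⟨l, rfl, hl, hls⟩
    have := two_mul_card_le_card_sum_add_count hl
    rw [hls] at this
    omega
  have hinf : sInf (LSet l₂.sum) = lD.card := by
    refine IsLeast.csInf_eq ⟨⟨lD, rfl, fun U hU => (hlD U hU).1, hlDs⟩, ?_⟩
    rintro _ ⟨l, rfl, hl, hls⟩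
    have := card_sum_add_mul_count_le hl
    rw [hls] at this
    exact Nat.le_of_mul_le_mul_left (by omega) (one_le_davC (G := G))
  rw [hsup, hinf]
  omega

theorem brho_eq_closure_inf [Finite G] (hD : DavC G ≠ 2) :
    Brho G = ↑(AddSubmonoid.closure (minZSOfCard G 2) ⊓
      AddSubmonoid.closure (minZSOfCard G (DavC G))) := by
  ext A
  rcases eq_or_ne A 0 with rfl | hA
  · exact iff_of_true ⟨Multiset.sum_zero, Or.inl rfl⟩ (zero_mem _)
  constructor
  · intro h
    exact mem_closure_inf_of_two_mul_sSup_eq hD hA h.1 ((mem_brho_iff hA h.1).1 h)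
  · intro h
    have hs : A ∈ AddSubmonoid.closure {U : Multiset G | IsMinZS U} :=
      AddSubmonoid.closure_mono (fun U hU => hU.1) h.1
    rw [← SetLike.mem_coe, closure_setOf_isMinZS] at hs
    exact (mem_brho_iff hA hs).2 (two_mul_sSup_eq_of_mem_closure_inf h)

theorem brho_eq_closure_of_davC_eq_two [Finite G] (hD : DavC G = 2) :
    Brho G = AddSubmonoid.closure {U : Multiset G | IsMinZS U} := by
  classical
  rw [closure_setOf_isMinZS]
  ext A
  refine ⟨fun h => h.1, fun hs => ?_⟩
  rcases eq_or_ne A 0 with rfl | hA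
  · exact ⟨hs, Or.inl rfl⟩
  have hlength : ∀ k ∈ LSet A, 2 * k = A.card + A.count 0 := by
    rintro _ ⟨l, rfl, hl, rfl⟩
    have := two_mul_card_le_card_sum_add_count hl
    have := card_sum_add_mul_count_le hl
    rw [hD] at this
    omega
  have hsup := hlength _ (Nat.sSup_mem (LSet_nonempty hs) (LSet_bddAbove A))
  have hinf := hlength _ (Nat.sInf_mem (LSet_nonempty hs))
  rw [mem_brho_iff hA hs, hD]
  omega

theorem exists_fg_eq_brho [Finite G] :
    ∃ P : AddSubmonoid (Multiset G), P.FG ∧ Brho G = P := by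
  have fg_closure {S : Set (Multiset G)} (hS : S ⊆ {U | IsMinZS U}) :
      (AddSubmonoid.closure S).FG :=
    (AddSubmonoid.fg_iff _).2 ⟨S, rfl, finite_setOf_isMinZS.subset hS⟩
  by_cases hD : DavC G = 2
  · exact ⟨_, fg_closure subset_rfl, brho_eq_closure_of_davC_eq_two hD⟩
  · exact ⟨_, (fg_closure fun U hU => hU.1).inf (fg_closure fun U hU => hU.1),
      brho_eq_closure_inf hD⟩

end Atoms

theorem stmt3 {G : Type*} [AddCommGroup G] [Fintype G] :
    (0 : Multiset G) ∈ Brho G ∧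
    (∀ A ∈ Brho G, ∀ B ∈ Brho G, A + B ∈ Brho G) ∧
    ∃ S : Finset (Multiset G), (S : Set (Multiset G)) ⊆ Brho G ∧
      Brho G ⊆ (AddSubmonoid.closure (S : Set (Multiset G)) : Set (Multiset G)) := by
  obtain ⟨P, ⟨S, rfl⟩, hP⟩ := exists_fg_eq_brho (G := G)
  rw [hP]
  exact ⟨zero_mem _, fun A hA B hB => add_mem hA hB, S, AddSubmonoid.subset_closure, subset_rfl⟩
end

section
/- Let G be a cyclic group of even order n ≥ 4 such that n + 1 is composite, say n + 1 = ab with a, b ≥ 3, and let g be a generator of G. Then the zero-sum sequence A' = gⁿ(ag)ⁿ factors both as a product of 2 atoms and as a product of 3 atoms; explicitly, A' = (g·(ag)^{n−b})(g^{n−a}·(ag))(g^{a−1}·(ag)^{b−1}), so min L((−A')A') + 1 ∈ L((−A')A'). -/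
open Multiset

section ZeroSum

variable {G : Type*} [AddCommGroup G]

theorem exists_le_ne_zero_sum_eq_zero_of_card_le [Fintype G] (S : Multiset G)
    (hS : Fintype.card G ≤ card S) : ∃ V ≤ S, V ≠ 0 ∧ V.sum = 0 := by
  set L := S.toList
  have hL : Fintype.card G < Fintype.card (Fin (L.length + 1)) := by
    rw [Fintype.card_fin, length_toList]; omega
  -- two equal prefix sums enclose a nonempty zero-sum segment
  have segment : ∀ i j : ℕ, i < j → j ≤ L.length → (L.take i).sum = (L.take j).sum →
      ∃ V ≤ S, V ≠ 0 ∧ V.sum = 0 := by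
    intro i j hij hj hsum
    have hsplit := congrArg List.sum (List.take_append_drop i (L.take j))
    rw [List.take_take, min_eq_left hij.le, List.sum_append, ← hsum] at hsplit
    refine ⟨((L.take j).drop i : List G), ?_, ?_, by simpa using hsplit⟩
    · rw [← S.coe_toList]
      exact ((List.drop_sublist _ _).trans (List.take_sublist _ _)).subperm
    · simp only [ne_eq, coe_eq_zero, List.drop_eq_nil_iff, List.length_take]
      omega
  obtain ⟨i, j, hne, heq⟩ :=
    Fintype.exists_ne_map_eq_of_card_lt (fun i : Fin (L.length + 1) => (L.take i).sum) hL
  rcases Fin.lt_or_lt_of_ne hne with h | h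
  · exact segment i j h (Nat.lt_succ_iff.1 j.isLt) heq
  · exact segment j i h (Nat.lt_succ_iff.1 i.isLt) heq.symm

theorem IsMinZS.card_le [Fintype G] {U : Multiset G} (hU : IsMinZS U) :
    card U ≤ Fintype.card G := by
  classical
  by_contra! hlt
  obtain ⟨x, hx⟩ := exists_mem_of_ne_zero hU.1
  have hcard : card (U.erase x) + 1 = card U := card_erase_add_one hx
  obtain ⟨V, hV, hV0, hVsum⟩ :=
    exists_le_ne_zero_sum_eq_zero_of_card_le (U.erase x) (by omega)
  have hVU := hU.2.2 V (hV.trans (erase_le x U)) hV0 hVsum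
  have := card_le_card hV
  rw [hVU] at this
  omega

theorem isMinZS_replicate {x : G} {n : ℕ} (hx : addOrderOf x = n) (hn : n ≠ 0) :
    IsMinZS (replicate n x) := by
  subst hx
  refine ⟨fun h => hn (by simpa using congrArg card h), by simp [addOrderOf_nsmul_eq_zero], ?_⟩
  intro V hV hV0 hVsum
  obtain ⟨k, hk, rfl⟩ := le_replicate_iff.1 hV
  have hk0 : k ≠ 0 := by rintro rfl; simp at hV0
  rw [sum_replicate, ← addOrderOf_dvd_iff_nsmul_eq_zero] at hVsum
  rw [le_antisymm hk (Nat.le_of_dvd (Nat.pos_of_ne_zero hk0) hVsum)]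

theorem ne_nsmul_of_lt_addOrderOf {g : G} {a : ℕ} (ha : 1 < a) (h : a < addOrderOf g) :
    g ≠ a • g := fun hg => by
  have := nsmul_injOn_Iio_addOrderOf (x := g) (show 1 < addOrderOf g by omega) h
    (by simpa using hg)
  omega

theorem addOrderOf_nsmul_of_add_one_eq_mul {g : G} {a b : ℕ} (hab : addOrderOf g + 1 = a * b) :
    addOrderOf (a • g) = addOrderOf g :=
  Nat.Coprime.addOrderOf_nsmul <| Nat.Coprime.coprime_mul_right_right <|
    hab ▸ Nat.coprime_self_add_right.2 (Nat.coprime_one_right _)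

theorem Multiset.replicate_add_replicate_eq_add_add {α : Type*} (x y : α)
    {n p₁ p₂ p₃ q₁ q₂ q₃ : ℕ} (hp : p₁ + p₂ + p₃ = n) (hq : q₁ + q₂ + q₃ = n) :
    replicate n x + replicate n y = (replicate p₁ x + replicate q₁ y) +
      (replicate p₂ x + replicate q₂ y) + (replicate p₃ x + replicate q₃ y) := by
  rw [← congrArg (replicate · x) hp, ← congrArg (replicate · y) hq]
  simp only [replicate_add]
  abel

theorem Multiset.exists_eq_replicate_add_replicate_of_le {α : Type*} {x y : α} (hxy : x ≠ y)
    {p q : ℕ} {V : Multiset α} (hV : V ≤ replicate p x + replicate q y) :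
    ∃ i ≤ p, ∃ j ≤ q, V = replicate i x + replicate j y := by
  classical
  have hcount := fun z => count_le_of_le z hV
  simp only [count_add, count_replicate] at hcount
  refine ⟨V.count x, by simpa [hxy.symm] using hcount x, V.count y,
    by simpa [hxy] using hcount y, ext.2 fun z => ?_⟩
  simp only [count_add, count_replicate]
  by_cases hzx : x = z
  · subst hzx; simp [hxy.symm]
  by_cases hzy : y = z
  · subst hzy; simp [hxy]
  specialize hcount z
  simp only [hzx, hzy, if_false] at hcount ⊢
  omega

theorem isMinZS_replicate_add_replicate {x y : G} (hxy : x ≠ y) {p q : ℕ} (hpq : p + q ≠ 0)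
    (hsum : p • x + q • y = 0)
    (hmin : ∀ i ≤ p, ∀ j ≤ q, i + j ≠ 0 → i • x + j • y = 0 → i = p ∧ j = q) :
    IsMinZS (replicate p x + replicate q y) := by
  refine ⟨fun h => hpq (by simpa using congrArg card h), by simpa using hsum, ?_⟩
  intro V hV hV0 hVsum
  obtain ⟨i, hi, j, hj, rfl⟩ := exists_eq_replicate_add_replicate_of_le hxy hV
  obtain ⟨rfl, rfl⟩ := hmin i hi j hj (by rintro h; simp_all) (by simpa using hVsum)
  rfl

end ZeroSum

section LengthSet

variable {G : Type*} [AddCommGroup G]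

theorem one_mem_LSet {U : Multiset G} (hU : IsMinZS U) : 1 ∈ LSet U :=
  ⟨{U}, rfl, by simpa using hU, by simp⟩

theorem add_mem_LSet_add {A B : Multiset G} {k m : ℕ} (hk : k ∈ LSet A) (hm : m ∈ LSet B) :
    k + m ∈ LSet (A + B) := by
  obtain ⟨l, rfl, hl, rfl⟩ := hk
  obtain ⟨l', rfl, hl', rfl⟩ := hm
  refine ⟨l + l', card_add l l', fun U hU => ?_, sum_add l l'⟩
  rcases mem_add.1 hU with hU | hU
  exacts [hl U hU, hl' U hU]

theorem card_le_mul_of_mem_LSet [Fintype G] {A : Multiset G} {k : ℕ} (hk : k ∈ LSet A) :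
    card A ≤ k * Fintype.card G := by
  obtain ⟨l, rfl, hl, rfl⟩ := hk
  rw [← join, card_join, ← smul_eq_mul, ← card_map card l]
  refine sum_le_card_nsmul _ _ fun c hc => ?_
  obtain ⟨U, hU, rfl⟩ := mem_map.1 hc
  exact (hl U hU).card_le

theorem sInf_LSet_eq_of_card_eq [Fintype G] {A : Multiset G} {k : ℕ} (hk : k ∈ LSet A)
    (hA : card A = k * Fintype.card G) : sInf (LSet A) = k := by
  refine le_antisymm (Nat.sInf_le hk) (le_csInf ⟨k, hk⟩ fun m hm => ?_)
  have := card_le_mul_of_mem_LSet hm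
  exact Nat.le_of_mul_le_mul_right (hA ▸ this) Fintype.card_pos

end LengthSet

/-- The arithmetic condition under which `gᵖ (a • g)^q` is a minimal zero-sum sequence for `g`
of order `n`: a subsequence `gⁱ (a • g)ʲ` sums to zero iff `n ∣ i + j * a`. -/
def IsMinZSExponent (n a p q : ℕ) : Prop :=
  p + q ≠ 0 ∧ n ∣ p + q * a ∧ ∀ i ≤ p, ∀ j ≤ q, i + j ≠ 0 → n ∣ i + j * a → i = p ∧ j = q

theorem isMinZS_replicate_add_replicate_nsmul {G : Type*} [AddCommGroup G] {g : G}
    {n a p q : ℕ} (hg : addOrderOf g = n) (hga : g ≠ a • g) (h : IsMinZSExponent n a p q) :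
    IsMinZS (replicate p g + replicate q (a • g)) := by
  have hzero : ∀ i j : ℕ, i • g + j • (a • g) = 0 ↔ n ∣ i + j * a := fun i j => by
    rw [smul_smul, ← add_nsmul, ← hg, addOrderOf_dvd_iff_nsmul_eq_zero]
  exact isMinZS_replicate_add_replicate hga h.1 ((hzero p q).2 h.2.1)
    fun i hi j hj hij hs => h.2.2 i hi j hj hij ((hzero i j).1 hs)

theorem isMinZSExponent_one_sub {n a b : ℕ} (hab : n + 1 = a * b) (ha : 2 ≤ a) :
    IsMinZSExponent n a 1 (n - b) := by
  have hb : 0 < b := Nat.pos_of_ne_zero (by rintro rfl; simp at hab)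
  have hbn : b ≤ n := by have := Nat.mul_le_mul_right b ha; omega
  refine ⟨by omega, ⟨a - 1, ?_⟩, fun i hi j hj hij hdvd => ?_⟩
  · have habz : (n : ℤ) + 1 = a * b := by exact_mod_cast hab
    zify [hbn, show 1 ≤ a by omega]
    linear_combination habz
  -- `b` inverts `a` modulo `n`
  have hdvd' : n ∣ i * b + j := by
    have e : (i + j * a) * b = i * b + j + j * n := by rw [add_mul, mul_assoc, ← hab]; ring
    exact (Nat.dvd_add_left (dvd_mul_left n j)).1 (e ▸ hdvd.mul_right b)
  interval_cases i <;>
  · have := Nat.le_of_dvd (by omega) hdvd'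
    omega

theorem isMinZSExponent_sub_one {n a : ℕ} (ha : 0 < a) (han : a ≤ n) :
    IsMinZSExponent n a (n - a) 1 := by
  refine ⟨by omega, by rw [one_mul, Nat.sub_add_cancel han], fun i hi j hj hij hdvd => ?_⟩
  obtain rfl | rfl : j = 0 ∨ j = 1 := by omega
  all_goals
    simp only [zero_mul, one_mul, add_zero] at hdvd
    have := Nat.le_of_dvd (by omega) hdvd
    omega

theorem isMinZSExponent_pred_pred {n a b : ℕ} (hab : n + 1 = a * b) (ha : 2 ≤ a) :
    IsMinZSExponent n a (a - 1) (b - 1) := by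
  have hb : 0 < b := Nat.pos_of_ne_zero (by rintro rfl; simp at hab)
  have hn : a - 1 + (b - 1) * a = n := by
    have habz : (n : ℤ) + 1 = a * b := by exact_mod_cast hab
    zify [hb, show 1 ≤ a by omega]
    linear_combination -habz
  refine ⟨by omega, hn ▸ dvd_rfl, fun i hi j hj hij hdvd => ?_⟩
  -- `i + j * a` is a positive multiple of `n` and at most `n`, so it is `n`; then divide by `a`
  have hle : i + j * a ≤ n := hn ▸ Nat.add_le_add hi (Nat.mul_le_mul_right a hj)
  have heq : i + j * a = a - 1 + (b - 1) * a :=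
    hn ▸ le_antisymm hle (Nat.le_of_dvd (by nlinarith [Nat.pos_of_ne_zero hij]) hdvd)
  have hdiv := congrArg (· / a) heq
  simp only [Nat.add_mul_div_right _ _ (show 0 < a by omega),
    Nat.div_eq_of_lt (show i < a by omega), Nat.div_eq_of_lt (show a - 1 < a by omega)] at hdiv
  obtain rfl : j = b - 1 := by omega
  omega

theorem stmt17_general {G : Type*} [AddCommGroup G] [Fintype G] (n a b : ℕ)
    (hab : n + 1 = a * b) (ha : 3 ≤ a) (hb : 3 ≤ b)
    (hcard : Fintype.card G = n)
    (g : G) (hg : addOrderOf g = n) :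
    ∀ (h : G) (A' W₁ W₂ W₃ B : Multiset G),
      h = a • g →
      A' = Multiset.replicate n g + Multiset.replicate n h →
      W₁ = g ::ₘ Multiset.replicate (n - b) h →
      W₂ = Multiset.replicate (n - a) g + {h} →
      W₃ = Multiset.replicate (a - 1) g + Multiset.replicate (b - 1) h →
      B = A'.map (fun x => -x) + A' →
      IsMinZS W₁ ∧ IsMinZS W₂ ∧ IsMinZS W₃ ∧ W₁ + W₂ + W₃ = A' ∧
      (2 : ℕ) ∈ LSet A' ∧ (3 : ℕ) ∈ LSet A' ∧
      sInf (LSet B) = 4 ∧ sInf (LSet B) + 1 ∈ LSet B := by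
  intro h A' W₁ W₂ W₃ B rfl rfl rfl rfl rfl rfl
  have han : a < n := by nlinarith
  have hbn : b < n := by nlinarith
  have hga : g ≠ a • g := ne_nsmul_of_lt_addOrderOf (by omega) (hg ▸ han)
  have hord : addOrderOf (a • g) = n := by
    rw [addOrderOf_nsmul_of_add_one_eq_mul (b := b) (hg ▸ hab), hg]
  have hW₁ : IsMinZS (g ::ₘ replicate (n - b) (a • g)) := by
    simpa [replicate_one, singleton_add] using
      isMinZS_replicate_add_replicate_nsmul hg hga (isMinZSExponent_one_sub hab (by omega))
  have hW₂ : IsMinZS (replicate (n - a) g + {a • g}) := by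
    simpa [replicate_one] using
      isMinZS_replicate_add_replicate_nsmul hg hga (isMinZSExponent_sub_one (by omega) han.le)
  have hW₃ : IsMinZS (replicate (a - 1) g + replicate (b - 1) (a • g)) :=
    isMinZS_replicate_add_replicate_nsmul hg hga (isMinZSExponent_pred_pred hab (by omega))
  have hsum := (replicate_add_replicate_eq_add_add g (a • g)
    (show 1 + (n - a) + (a - 1) = n by omega) (show n - b + 1 + (b - 1) = n by omega)).symm
  simp only [replicate_one, singleton_add] at hsum
  have h2 := add_mem_LSet_add (one_mem_LSet (isMinZS_replicate hg (by omega)))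
    (one_mem_LSet (isMinZS_replicate hord (by omega)))
  have h3 := hsum ▸ add_mem_LSet_add (add_mem_LSet_add (one_mem_LSet hW₁) (one_mem_LSet hW₂))
    (one_mem_LSet hW₃)
  have hneg : 2 ∈ LSet ((replicate n g + replicate n (a • g)).map (fun x => -x)) := by
    simpa [map_replicate] using
      add_mem_LSet_add (one_mem_LSet (isMinZS_replicate (by simpa using hg) (by omega)))
        (one_mem_LSet (isMinZS_replicate (by simpa using hord) (by omega)))
  have hmin := sInf_LSet_eq_of_card_eq (add_mem_LSet_add hneg h2) (by simp [hcard]; ring)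
  have h5 : 5 ∈ LSet _ := add_mem_LSet_add hneg h3
  exact ⟨hW₁, hW₂, hW₃, hsum, h2, h3, hmin, hmin ▸ h5⟩

theorem stmt17 {G : Type*} [AddCommGroup G] [Fintype G] (n a b : ℕ)
    (hn : 4 ≤ n) (heven : Even n) (hab : n + 1 = a * b) (ha : 3 ≤ a) (hb : 3 ≤ b)
    (hcyc : IsAddCyclic G) (hcard : Fintype.card G = n)
    (g : G) (hg : addOrderOf g = n) :
    ∀ (h : G) (A' W₁ W₂ W₃ B : Multiset G),
      h = a • g →
      A' = Multiset.replicate n g + Multiset.replicate n h →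
      W₁ = g ::ₘ Multiset.replicate (n - b) h →
      W₂ = Multiset.replicate (n - a) g + {h} →
      W₃ = Multiset.replicate (a - 1) g + Multiset.replicate (b - 1) h →
      B = A'.map (fun x => -x) + A' →
      IsMinZS W₁ ∧ IsMinZS W₂ ∧ IsMinZS W₃ ∧ W₁ + W₂ + W₃ = A' ∧
      (2 : ℕ) ∈ LSet A' ∧ (3 : ℕ) ∈ LSet A' ∧
      sInf (LSet B) = 4 ∧ sInf (LSet B) + 1 ∈ LSet B :=
  stmt17_general n a b hab ha hb hcard g hg
end
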